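/- Let X_1,…,X_n ∈ ℝ^d satisfy ‖X_j‖² ≤ β for all j and ⟨X_i, X_j⟩ ≥ C for all i, j. Then ∑_{i=1}^n ‖∑_{j=1}^n (σ(⟨X_i, X_j⟩) − 1) X_j‖² ≤ n³ · exp(−2C) · β. Hence the squared Frobenius-norm difference between the all-to-all skip-gram repulsion gradient (rows ∑_j σ(⟨X_i, X_j⟩) X_j) and the dimension-mean regularizer gradient (rows ∑_j X_j) decays exponentially in the constriction lower bound C. -/

import Mathlib

open RealInnerProductSpace BigOperators

/-! Since `|σ x - 1| ≤ exp (-x)`, every coefficient of row `i` is at most `exp (-C)` in size;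
Cauchy–Schwarz over the `n` terms then bounds each squared row norm by `n² exp (-2C) β`. -/

noncomputable def sigmoid (x : ℝ) : ℝ := 1 / (1 + Real.exp (-x))

lemma sigmoid_sub_one (x : ℝ) : sigmoid x - 1 = -(Real.exp (-x) / (1 + Real.exp (-x))) := by
  rw [sigmoid, div_sub_one (by positivity)]
  ring

lemma abs_sigmoid_sub_one_le (x : ℝ) : |sigmoid x - 1| ≤ Real.exp (-x) := by
  rw [sigmoid_sub_one, abs_neg, abs_of_nonneg (by positivity)]
  exact div_le_self (Real.exp_pos _).le (by linarith [Real.exp_pos (-x)])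

lemma sq_sigmoid_sub_one_le_of_le {C x : ℝ} (h : C ≤ x) :
    (sigmoid x - 1) ^ 2 ≤ Real.exp (-(2 * C)) :=
  calc (sigmoid x - 1) ^ 2 = |sigmoid x - 1| ^ 2 := (sq_abs _).symm
    _ ≤ Real.exp (-C) ^ 2 := by
        gcongr
        exact (abs_sigmoid_sub_one_le x).trans (Real.exp_le_exp.mpr (neg_le_neg h))
    _ = Real.exp (-(2 * C)) := by rw [← Real.exp_nat_mul]; ring_nf

section LinearCombination

variable {ι E : Type*} [Fintype ι] [SeminormedAddCommGroup E] [NormedSpace ℝ E]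

lemma norm_sum_smul_sq_le_card_mul (c : ι → ℝ) (v : ι → E) :
    ‖∑ j, c j • v j‖ ^ 2 ≤ Fintype.card ι * ∑ j, c j ^ 2 * ‖v j‖ ^ 2 :=
  calc ‖∑ j, c j • v j‖ ^ 2 ≤ (∑ j, ‖c j • v j‖) ^ 2 := by
        gcongr; exact norm_sum_le _ _
    _ ≤ Fintype.card ι * ∑ j, ‖c j • v j‖ ^ 2 := sq_sum_le_card_mul_sum_sq
    _ = Fintype.card ι * ∑ j, c j ^ 2 * ‖v j‖ ^ 2 := by
        simp only [norm_smul, mul_pow, Real.norm_eq_abs, sq_abs]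

lemma norm_sum_smul_sq_le_of_sq_le {c : ι → ℝ} {v : ι → E} {a b : ℝ}
    (hc : ∀ j, c j ^ 2 ≤ a) (hv : ∀ j, ‖v j‖ ^ 2 ≤ b) :
    ‖∑ j, c j • v j‖ ^ 2 ≤ Fintype.card ι ^ 2 * (a * b) :=
  calc ‖∑ j, c j • v j‖ ^ 2 ≤ Fintype.card ι * ∑ j, c j ^ 2 * ‖v j‖ ^ 2 :=
        norm_sum_smul_sq_le_card_mul c v
    _ ≤ Fintype.card ι * ∑ _j : ι, a * b := by
        refine mul_le_mul_of_nonneg_left (Finset.sum_le_sum fun j _ => ?_) (by positivity)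
        exact mul_le_mul (hc j) (hv j) (by positivity) ((sq_nonneg _).trans (hc j))
    _ = Fintype.card ι ^ 2 * (a * b) := by
        rw [Finset.sum_const, Finset.card_univ, nsmul_eq_mul]; ring

end LinearCombination

theorem grad_diff_sq_frobenius_le_general {n d : ℕ} (X : Fin n → EuclideanSpace ℝ (Fin d))
    (β C : ℝ)
    (hnorm : ∀ j, ‖X j‖ ^ 2 ≤ β)
    (hconstr : ∀ i j, C ≤ ⟪X i, X j⟫) :
    ∑ i, ‖∑ j, (sigmoid ⟪X i, X j⟫ - 1) • X j‖ ^ 2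
      ≤ (n : ℝ) ^ 3 * Real.exp (-(2 * C)) * β := by
  have hrow (i : Fin n) :
      ‖∑ j, (sigmoid ⟪X i, X j⟫ - 1) • X j‖ ^ 2
        ≤ (n : ℝ) ^ 2 * (Real.exp (-(2 * C)) * β) := by
    simpa using norm_sum_smul_sq_le_of_sq_le
      (fun j => sq_sigmoid_sub_one_le_of_le (hconstr i j)) hnorm
  calc ∑ i, ‖∑ j, (sigmoid ⟪X i, X j⟫ - 1) • X j‖ ^ 2
      ≤ ∑ _i : Fin n, (n : ℝ) ^ 2 * (Real.exp (-(2 * C)) * β) :=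
        Finset.sum_le_sum fun i _ => hrow i
    _ = (n : ℝ) ^ 3 * Real.exp (-(2 * C)) * β := by
        rw [Finset.sum_const, Finset.card_univ, Fintype.card_fin, nsmul_eq_mul]; ring

/-- If `‖X j‖² ≤ β` for all `j` and `⟨X i, X j⟩ ≥ C` for all `i, j`, then
`∑ i, ‖∑ j, (σ(⟨X i, X j⟩) - 1) X j‖² ≤ n³ · exp(-2C) · β`. -/
theorem grad_diff_sq_frobenius_le {n d : ℕ} (X : Fin n → EuclideanSpace ℝ (Fin d))
    (β C : ℝ) (hβ : 0 < β)
    (hnorm : ∀ j, ‖X j‖ ^ 2 ≤ β)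
    (hconstr : ∀ i j, C ≤ ⟪X i, X j⟫) :
    ∑ i, ‖∑ j, (sigmoid ⟪X i, X j⟫ - 1) • X j‖ ^ 2
      ≤ (n : ℝ) ^ 3 * Real.exp (-(2 * C)) * β :=
  grad_diff_sq_frobenius_le_general X β C hnorm hconstr
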